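/- arXiv:2312.10698 — 4 statements merged into one kernel-verified Lean document; each statement's English description precedes it below -/
import Mathlib

section
/- Let n = pq with p, q distinct primes and λ = lcm(p-1, q-1). Then for every w coprime to n, w^(nλ) ≡ 1 (mod n²). -/
/-! By the Chinese remainder theorem the exponent of `(ℤ/n²ℤ)ˣ` is the Carmichael function
`λ(n²) = lcm(λ(p²), λ(q²))`, and `λ(p²)` divides `φ(p²) = p(p - 1)`, which divides `n · lcm(p - 1, q - 1)`;
similarly for `q`. -/

open ArithmeticFunction

theorem Int.pow_modEq_one_of_carmichael_dvd {w : ℤ} {n e : ℕ} (hw : IsCoprime w n)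
    (he : carmichael n ∣ e) : w ^ e ≡ 1 [ZMOD n] := by
  obtain ⟨k, rfl⟩ := he
  rw [← ZMod.intCast_eq_intCast_iff, Int.cast_pow, ← ZMod.coe_unitOfIsCoprime w hw,
    ← Units.val_pow_eq_pow_val, pow_mul, pow_carmichael, one_pow, Units.val_one, Int.cast_one]

theorem carmichael_prime_sq_dvd {p : ℕ} (hp : p.Prime) : carmichael (p ^ 2) ∣ p * (p - 1) := by
  have htot : (p ^ 2).totient = p * (p - 1) := by
    rw [Nat.totient_prime_pow_succ hp 1, pow_one]
  exact htot ▸ carmichael_dvd_totient (p ^ 2)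

theorem carmichael_mul_sq_dvd_mul_lcm {p q : ℕ} (hp : p.Prime) (hq : q.Prime) (hpq : p ≠ q) :
    carmichael ((p * q) ^ 2) ∣ p * q * Nat.lcm (p - 1) (q - 1) := by
  have hcop : Nat.Coprime (p ^ 2) (q ^ 2) := ((Nat.coprime_primes hp hq).mpr hpq).pow 2 2
  rw [mul_pow, carmichael_mul hcop]
  refine Nat.lcm_dvd ((carmichael_prime_sq_dvd hp).trans ?_) ((carmichael_prime_sq_dvd hq).trans ?_)
  · rw [mul_assoc]
    exact Nat.mul_dvd_mul_left p ((Nat.dvd_lcm_left _ _).mul_left q)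
  · rw [mul_comm p, mul_assoc]
    exact Nat.mul_dvd_mul_left q ((Nat.dvd_lcm_right _ _).mul_left p)

/-- Carmichael-type fact mod n²: for n = pq, w coprime to n, w^(nλ) ≡ 1 (mod n²). -/
theorem paillier_carmichael_sq (p q : ℕ) (hp : p.Prime) (hq : q.Prime) (hpq : p ≠ q)
    (w : ℤ) (hw : IsCoprime w ((p * q : ℕ) : ℤ)) :
    w ^ ((p * q) * Nat.lcm (p - 1) (q - 1)) ≡ 1 [ZMOD ((p * q : ℕ) ^ 2 : ℕ)] := by
  refine Int.pow_modEq_one_of_carmichael_dvd ?_ (carmichael_mul_sq_dvd_mul_lcm hp hq hpq)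
  simpa using hw.pow_right (n := 2)
end

section
/- Paillier decryption is correct for g = 1+n: with n = pq (p, q distinct primes, each not dividing the other's predecessor), λ = lcm(p-1, q-1), L(u) = (u-1)/n, and ciphertext c = (1+n)^m · r^n mod n² where gcd(r,n)=1 and 0 ≤ m < n, we have L(c^λ mod n²) · (L((1+n)^λ mod n²))⁻¹ ≡ m (mod n). -/
/-!
Write `n = pq` and `λ = lcm (p - 1) (q - 1)`. Binomially, `(1 + n) ^ k ≡ 1 + k n (mod n²)`, and
`r ^ (nλ) ≡ 1 (mod n²)` because `φ(p²) = p (p - 1)` and `φ(q²) = q (q - 1)` both divide `nλ`.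
Hence `c ^ λ ≡ 1 + mλ n` and `(1 + n) ^ λ ≡ 1 + λ n (mod n²)`, so `L` returns `mλ` and `λ` modulo `n`,
and `λ` is a unit modulo `n` since neither `p` nor `q` divides `(p - 1) (q - 1)`.
-/

open scoped Nat

lemma Int.one_add_pow_modEq (n : ℤ) (k : ℕ) : (1 + n) ^ k ≡ 1 + k * n [ZMOD n ^ 2] :=
  Int.ModEq.symm <| Int.modEq_iff_dvd.mpr <| by
    simpa only [one_pow, one_mul, sub_sub, mul_comm n, add_comm (k * n)] using
      sq_dvd_add_pow_sub_sub n 1 k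

lemma Int.cast_emod_sq_sub_one_div_of_modEq {N : ℕ} (hN : N ≠ 0) {x a : ℤ}
    (h : x ≡ 1 + a * N [ZMOD N ^ 2]) : (((x % (N : ℤ) ^ 2 - 1) / N : ℤ) : ZMod N) = a := by
  obtain ⟨s, hs⟩ := Int.ModEq.dvd ((Int.emod_emod_of_dvd x dvd_rfl).trans h)
  have hsub : x % (N : ℤ) ^ 2 - 1 = N * (a - N * s) := by linear_combination -hs
  rw [hsub, Int.mul_ediv_cancel_left _ (by exact_mod_cast hN)]
  simp

lemma Int.pow_modEq_one_of_totient_dvd {r : ℤ} {N k : ℕ} (hr : IsCoprime r N) (hk : φ N ∣ k) :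
    r ^ k ≡ 1 [ZMOD N] := by
  obtain ⟨t, rfl⟩ := hk
  rw [← ZMod.intCast_eq_intCast_iff, Int.cast_pow, Int.cast_one, ← ZMod.coe_unitOfIsCoprime r hr,
    pow_mul, ← Units.val_pow_eq_pow_val, ZMod.pow_totient, Units.val_one, one_pow]

lemma Int.pow_modEq_one_prime_sq {ℓ : ℕ} (hℓ : ℓ.Prime) {r : ℤ} (hr : IsCoprime r ℓ) {k : ℕ}
    (hk : ℓ * (ℓ - 1) ∣ k) : r ^ k ≡ 1 [ZMOD ℓ ^ 2] := by
  have hφ : φ (ℓ ^ 2) = ℓ * (ℓ - 1) := by simp [Nat.totient_prime_pow_succ hℓ]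
  exact_mod_cast Int.pow_modEq_one_of_totient_dvd (N := ℓ ^ 2) (by exact_mod_cast hr.pow_right)
    (hφ ▸ hk)

lemma Int.pow_mul_lcm_modEq_one {p q : ℕ} (hp : p.Prime) (hq : q.Prime) (hpq : p ≠ q) {r : ℤ}
    (hr : IsCoprime r ((p * q : ℕ) : ℤ)) :
    r ^ (p * q * Nat.lcm (p - 1) (q - 1)) ≡ 1 [ZMOD ((p * q : ℕ) : ℤ) ^ 2] := by
  push_cast at hr ⊢
  have hp2 : r ^ (p * q * Nat.lcm (p - 1) (q - 1)) ≡ 1 [ZMOD (p : ℤ) ^ 2] :=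
    Int.pow_modEq_one_prime_sq hp hr.of_mul_right_left <|
      mul_dvd_mul (dvd_mul_right p q) (Nat.dvd_lcm_left _ _)
  have hq2 : r ^ (p * q * Nat.lcm (p - 1) (q - 1)) ≡ 1 [ZMOD (q : ℤ) ^ 2] :=
    Int.pow_modEq_one_prime_sq hq hr.of_mul_right_right <|
      mul_dvd_mul (dvd_mul_left q p) (Nat.dvd_lcm_right _ _)
  have hcop : IsCoprime ((p : ℤ) ^ 2) ((q : ℤ) ^ 2) :=
    (Nat.isCoprime_iff_coprime.mpr ((Nat.coprime_primes hp hq).mpr hpq)).pow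
  rw [mul_pow]
  exact Int.modEq_iff_dvd.mpr (hcop.mul_dvd (Int.modEq_iff_dvd.mp hp2) (Int.modEq_iff_dvd.mp hq2))

lemma Nat.coprime_pred_mul_pred {p q : ℕ} (hp : p.Prime) (h : ¬ p ∣ q - 1) :
    Nat.Coprime ((p - 1) * (q - 1)) p :=
  Nat.Coprime.mul_left ((Nat.coprime_self_sub_left hp.one_le).mpr (Nat.coprime_one_left p))
    (Nat.coprime_comm.mp ((hp.coprime_iff_not_dvd).mpr h))

lemma Nat.coprime_lcm_pred_pred_mul {p q : ℕ} (hp : p.Prime) (hq : q.Prime)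
    (h1 : ¬ p ∣ q - 1) (h2 : ¬ q ∣ p - 1) : Nat.Coprime (Nat.lcm (p - 1) (q - 1)) (p * q) := by
  refine (Nat.Coprime.mul_right (Nat.coprime_pred_mul_pred hp h1) ?_).coprime_dvd_left
    (Nat.lcm_dvd_mul _ _)
  rw [mul_comm]
  exact Nat.coprime_pred_mul_pred hq h2

theorem paillier_decryption_correct_general (p q : ℕ) (hp : p.Prime) (hq : q.Prime)
    (hpq : p ≠ q) (h1 : ¬ p ∣ (q - 1)) (h2 : ¬ q ∣ (p - 1))
    (r : ℤ) (hr : IsCoprime r ((p * q : ℕ) : ℤ)) (m : ℕ) :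
    let n : ℤ := ((p * q : ℕ) : ℤ)
    let lam : ℕ := Nat.lcm (p - 1) (q - 1)
    let c : ℤ := (1 + n) ^ m * r ^ (p * q)
    ((((c ^ lam % n ^ 2) - 1) / n : ℤ) : ZMod (p * q)) *
      (((((1 + n) ^ lam % n ^ 2) - 1) / n : ℤ) : ZMod (p * q))⁻¹ =
        (m : ZMod (p * q)) := by
  intro n lam c
  have hn : p * q ≠ 0 := Nat.mul_ne_zero hp.ne_zero hq.ne_zero
  have hc : c ^ lam ≡ 1 + (m * lam : ℕ) * n [ZMOD n ^ 2] :=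
    calc c ^ lam = (1 + n) ^ (m * lam) * r ^ (p * q * lam) := by simp only [c]; ring
      _ ≡ (1 + (m * lam : ℕ) * n) * 1 [ZMOD n ^ 2] :=
        (Int.one_add_pow_modEq n _).mul (Int.pow_mul_lcm_modEq_one hp hq hpq hr)
      _ = 1 + (m * lam : ℕ) * n := mul_one _
  rw [Int.cast_emod_sq_sub_one_div_of_modEq hn hc,
    Int.cast_emod_sq_sub_one_div_of_modEq hn (Int.one_add_pow_modEq n lam)]
  push_cast
  rw [mul_assoc, ZMod.coe_mul_inv_eq_one _ (Nat.coprime_lcm_pred_pred_mul hp hq h1 h2), mul_one]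

/-- Paillier decryption correctness for g = 1+n:
    L(c^λ mod n²) · (L((1+n)^λ mod n²))⁻¹ ≡ m (mod n), where L(u) = (u-1)/n. -/
theorem paillier_decryption_correct (p q : ℕ) (hp : p.Prime) (hq : q.Prime)
    (hpq : p ≠ q) (h1 : ¬ p ∣ (q - 1)) (h2 : ¬ q ∣ (p - 1))
    (r : ℤ) (hr : IsCoprime r ((p * q : ℕ) : ℤ)) (m : ℕ) (hm : m < p * q) :
    let n : ℤ := ((p * q : ℕ) : ℤ)
    let lam : ℕ := Nat.lcm (p - 1) (q - 1)
    let c : ℤ := (1 + n) ^ m * r ^ (p * q)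
    ((((c ^ lam % n ^ 2) - 1) / n : ℤ) : ZMod (p * q)) *
      (((((1 + n) ^ lam % n ^ 2) - 1) / n : ℤ) : ZMod (p * q))⁻¹ =
        (m : ZMod (p * q)) :=
  paillier_decryption_correct_general p q hp hq hpq h1 h2 r hr m
end

section
/- BFV decryption rounding correctness: let q, t be positive integers, with scaling Δ = ⌊q/t⌋ and ε = q/t − Δ (so 0 ≤ ε < 1). If m and e' are integers with 0 ≤ m < t and |e' − ε·m| < q/(2t), then rounding (t/q)·(Δ·m + e') to the nearest integer yields m. -/
/-- BFV decryption rounding correctness: with Δ = ⌊q/t⌋, ε = q/t − Δ,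
    0 ≤ m < t and |e' − ε·m| < q/(2t), rounding (t/q)·(Δ·m + e') yields m. -/
theorem bfv_rounding_correct (q t : ℕ) (hq : 0 < q) (ht : 0 < t) (m e' : ℤ)
    (hm0 : 0 ≤ m) (hmt : m < t)
    (he : |(e' : ℝ) - ((q : ℝ) / t - ((⌊(q : ℝ) / t⌋ : ℤ) : ℝ)) * m| <
      (q : ℝ) / (2 * t)) :
    round ((t : ℝ) / q * (((⌊(q : ℝ) / t⌋ : ℤ) : ℝ) * m + e')) = m := by
  have hq0 : (0 : ℝ) < q := by exact_mod_cast hq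
  have ht0 : (0 : ℝ) < t := by exact_mod_cast ht
  set ε : ℝ := (q : ℝ) / t - ((⌊(q : ℝ) / t⌋ : ℤ) : ℝ) with hε
  set δ : ℝ := (t : ℝ) / q * ((e' : ℝ) - ε * m) with hδ
  have key : (t : ℝ) / q * (((⌊(q : ℝ) / t⌋ : ℤ) : ℝ) * m + e') = m + δ := by
    rw [hδ, hε]
    field_simp
    ring
  rw [key]
  have hδhalf : |δ| < 1 / 2 := by
    rw [hδ, abs_mul, abs_of_pos (by positivity : (0:ℝ) < (t:ℝ)/q)]
    calc (t : ℝ) / q * |(e' : ℝ) - ε * m| < (t : ℝ) / q * ((q : ℝ) / (2 * t)) := by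
          apply mul_lt_mul_of_pos_left he (by positivity)
      _ = 1 / 2 := by field_simp
  have : round ((m : ℝ) + δ) = m + round δ := by
    rw [add_comm, round_add_intCast, add_comm]
  rw [this, round_eq_zero_iff.mpr ?_, add_zero]
  rw [abs_lt] at hδhalf
  constructor <;> simp <;> linarith [hδhalf.1, hδhalf.2]
end

section
/- In the multiplicative group (ZMod n²)ˣ for n = pq with distinct primes p, q, the order of the element 1 + n is exactly n. -/
theorem one_add_pow_of_mul_self_eq_zero {R : Type*} [Semiring R] {c : R} (hc : c * c = 0)
    (k : ℕ) : (1 + c) ^ k = 1 + k * c := by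
  induction k with
  | zero => simp
  | succ k ih =>
    rw [pow_succ, ih, add_mul, one_mul, mul_add, mul_one, mul_assoc, hc, mul_zero, add_zero,
      Nat.cast_succ, add_one_mul, add_assoc, add_comm c]

theorem orderOf_one_add_of_mul_self_eq_zero {R : Type*} [Ring R] {c : R} (hc : c * c = 0) :
    orderOf (1 + c) = addOrderOf c := by
  rw [← orderOf_ofAdd_eq_addOrderOf, orderOf_eq_orderOf_iff]
  intro k
  rw [one_add_pow_of_mul_self_eq_zero hc, add_eq_left, ← ofAdd_nsmul, ofAdd_eq_one, nsmul_eq_mul]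

theorem ZMod.orderOf_one_add_natCast_self {n : ℕ} (hn : n ≠ 0) :
    orderOf (1 + n : ZMod (n ^ 2)) = n := by
  have hsq : (n : ZMod (n ^ 2)) * n = 0 := by
    rw [← Nat.cast_mul, ← sq, ZMod.natCast_self]
  rw [orderOf_one_add_of_mul_self_eq_zero hsq, ZMod.addOrderOf_coe _ (pow_ne_zero 2 hn),
    Nat.gcd_eq_right (dvd_pow_self n two_ne_zero), sq, Nat.mul_div_cancel _ (Nat.pos_of_ne_zero hn)]

theorem paillier_order_one_add_n_general (p q : ℕ) (hp : p.Prime) (hq : q.Prime)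
    (u : (ZMod ((p * q) ^ 2))ˣ) (hu : (u : ZMod ((p * q) ^ 2)) = 1 + (p * q : ℕ)) :
    orderOf u = p * q := by
  rw [← orderOf_units, hu]
  exact ZMod.orderOf_one_add_natCast_self (mul_ne_zero hp.ne_zero hq.ne_zero)

/-- The order of the unit 1 + n in (ZMod n²)ˣ is exactly n, for n = pq. -/
theorem paillier_order_one_add_n (p q : ℕ) (hp : p.Prime) (hq : q.Prime) (hpq : p ≠ q)
    (u : (ZMod ((p * q) ^ 2))ˣ) (hu : (u : ZMod ((p * q) ^ 2)) = 1 + (p * q : ℕ)) :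
    orderOf u = p * q :=
  paillier_order_one_add_n_general p q hp hq u hu
end
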